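/- arXiv:1012.0710 — 5 statements merged into one kernel-verified Lean document; each statement's English description precedes it below -/
import Mathlib

section
/- Under a change of the pair (Y, Z) of the form Y' = αY + (element of D₂), Z' = βZ + (element of D₅) with α, β ≠ 0, the matrix (a_{ij}) defined by [Xᵢ, [Y', X_j]] ≡ a'_{ij} Z' mod D₅ satisfies (a'_{ij}) = (α/β)(a_{ij}); in particular the rank and the signature up to sign of (a_{ij}) are independent of the choice of Y and Z. -/
/-!
The correction `w ∈ D₂` commutes with `X₁, X₂`, so `⁅Xᵢ, ⁅Y', Xⱼ⁆⁆ = α • ⁅Xᵢ, ⁅Y, Xⱼ⁆⁆`, whose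
`Z`-coefficient modulo `D₅` is `α aᵢⱼ`; on the other side the correction `u ∈ D₅` of `Z'` is
invisible modulo `D₅`, so that coefficient is also `β a'ᵢⱼ`. Since `Z ∉ D₅`, coefficients of `Z`
modulo `D₅` are unique, giving `β a' = α a`; the rank is then unchanged as `α / β ≠ 0`.
-/

theorem lie_eq_zero_of_mem_span {R L : Type*} [CommRing R] [LieRing L] [LieAlgebra R L]
    {s : Set L} {x w : L} (hs : ∀ y ∈ s, ⁅y, x⁆ = 0) (hw : w ∈ Submodule.span R s) :
    ⁅w, x⁆ = 0 := by
  induction hw using Submodule.span_induction with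
  | mem y hy => exact hs y hy
  | zero => exact zero_lie x
  | add y z _ _ hy hz => rw [add_lie, hy, hz, add_zero]
  | smul c y _ hy => rw [smul_lie, hy, smul_zero]

theorem Submodule.eq_of_sub_smul_mem_of_notMem {K V : Type*} [Field K] [AddCommGroup V]
    [Module K V] {p : Submodule K V} {z v : V} (hz : z ∉ p) {a b : K}
    (ha : v - a • z ∈ p) (hb : v - b • z ∈ p) : a = b := by
  by_contra hab
  have hdiff : (b - a) • z ∈ p := by
    convert p.sub_mem ha hb using 1
    module
  exact hz ((p.smul_mem_iff (sub_ne_zero.mpr (Ne.symm hab))).mp hdiff)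

theorem stmt_3_general (g : Type*) [LieRing g] [LieAlgebra ℝ g]
    (X₁ X₂ Y Y₁ Y₂ Z : g)
    (hindep : LinearIndependent ℝ ![X₁, X₂, Y, Y₁, Y₂, Z])
    (hX : ⁅X₁, X₂⁆ = 0)
    (α β : ℝ) (hα : α ≠ 0) (hβ : β ≠ 0) (w u : g)
    (hw : w ∈ Submodule.span ℝ {X₁, X₂})
    (hu : u ∈ Submodule.span ℝ {X₁, X₂, Y, Y₁, Y₂})
    (a a' : Fin 2 → Fin 2 → ℝ)
    (ha : ∀ i j, ⁅![X₁, X₂] i, ⁅Y, ![X₁, X₂] j⁆⁆ - a i j • Z ∈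
        Submodule.span ℝ {X₁, X₂, Y, Y₁, Y₂})
    (ha' : ∀ i j, ⁅![X₁, X₂] i, ⁅α • Y + w, ![X₁, X₂] j⁆⁆ - a' i j • (β • Z + u) ∈
        Submodule.span ℝ {X₁, X₂, Y, Y₁, Y₂}) :
    (∀ i j, a' i j = (α / β) * a i j) ∧
    (Matrix.of a').rank = (Matrix.of a).rank := by
  set D₅ : Submodule ℝ g := Submodule.span ℝ {X₁, X₂, Y, Y₁, Y₂}
  have hZ : Z ∉ D₅ := by
    simpa [Set.image_insert_eq] using
      hindep.notMem_span_image (s := {0, 1, 2, 3, 4}) (x := 5) (by decide)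
  have hwX (j : Fin 2) : ⁅w, ![X₁, X₂] j⁆ = 0 := by
    have hX' : ⁅X₂, X₁⁆ = 0 := by rw [← lie_skew, hX, neg_zero]
    refine lie_eq_zero_of_mem_span ?_ hw
    fin_cases j <;> simp [hX, hX']
  have hcoeff (i j : Fin 2) : β * a' i j = α * a i j := by
    refine D₅.eq_of_sub_smul_mem_of_notMem hZ (v := α • ⁅![X₁, X₂] i, ⁅Y, ![X₁, X₂] j⁆⁆) ?_ ?_
    · convert D₅.add_mem (ha' i j) (D₅.smul_mem (a' i j) hu) using 1
      rw [add_lie, smul_lie, hwX j, add_zero, lie_smul]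
      module
    · convert D₅.smul_mem α (ha i j) using 1
      module
  have ha'_eq (i j : Fin 2) : a' i j = (α / β) * a i j := by
    rw [div_mul_eq_mul_div, eq_div_iff hβ, ← hcoeff, mul_comm]
  refine ⟨ha'_eq, ?_⟩
  have hM : Matrix.of a' = (α / β) • Matrix.of a := by
    ext i j
    simp [ha'_eq i j]
  rw [hM, Matrix.rank_smul_of_mem_nonZeroDivisors _
    (mem_nonZeroDivisors_of_ne_zero (div_ne_zero hα hβ))]

/-- Under a change `Y' = α•Y + w` (`w ∈ D₂`), `Z' = β•Z + u` (`u ∈ D₅`) with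
`α, β ≠ 0`, the matrix `(a'_{ij})` defined by `⁅Xᵢ, ⁅Y', Xⱼ⁆⁆ ≡ a'_{ij} • Z' mod D₅`
satisfies `a'_{ij} = (α/β) a_{ij}`; in particular the rank of `(a_{ij})` is
independent of the choice of `Y` and `Z`. -/
theorem stmt_3 (g : Type*) [LieRing g] [LieAlgebra ℝ g]
    (X₁ X₂ Y Y₁ Y₂ Z : g)
    (hindep : LinearIndependent ℝ ![X₁, X₂, Y, Y₁, Y₂, Z])
    (hspan : Submodule.span ℝ {X₁, X₂, Y, Y₁, Y₂, Z} = ⊤)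
    (hY₁ : Y₁ = ⁅Y, X₁⁆) (hY₂ : Y₂ = ⁅Y, X₂⁆) (hX : ⁅X₁, X₂⁆ = 0)
    (α β : ℝ) (hα : α ≠ 0) (hβ : β ≠ 0) (w u : g)
    (hw : w ∈ Submodule.span ℝ {X₁, X₂})
    (hu : u ∈ Submodule.span ℝ {X₁, X₂, Y, Y₁, Y₂})
    (a a' : Fin 2 → Fin 2 → ℝ)
    (ha : ∀ i j, ⁅![X₁, X₂] i, ⁅Y, ![X₁, X₂] j⁆⁆ - a i j • Z ∈
        Submodule.span ℝ {X₁, X₂, Y, Y₁, Y₂})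
    (ha' : ∀ i j, ⁅![X₁, X₂] i, ⁅α • Y + w, ![X₁, X₂] j⁆⁆ - a' i j • (β • Z + u) ∈
        Submodule.span ℝ {X₁, X₂, Y, Y₁, Y₂}) :
    (∀ i j, a' i j = (α / β) * a i j) ∧
    (Matrix.of a').rank = (Matrix.of a).rank :=
  stmt_3_general g X₁ X₂ Y Y₁ Y₂ Z hindep hX α β hα hβ w u hw hu a a' ha ha'
end

section
/- There exists a 6-dimensional real graded nilpotent Lie algebra g¹ with basis e₁, …, e₅, e₇ and nonzero brackets exactly [e₁,e₃] = e₄, [e₂,e₃] = e₅, [e₂,e₅] = e₇, [e₃,e₄] = e₇ (and those forced by antisymmetry); i.e., these structure constants satisfy the Jacobi identity. -/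
/-!
Put the bracket given by the structure constants on `ℝ⁶`. Bilinearity and antisymmetry are
visible from the formula, and the Jacobi identity is a polynomial identity that only has
content in the `e₇`-coordinate. Brackets land in `span(e₄, e₅, e₇)`, brackets with those land in
`span(e₇)`, and `e₇` is central, so all brackets of length four vanish; in particular every
`ad x` is nilpotent and Engel's theorem applies.
-/

/-- The coordinates `0, …, 5` are those of `e₁, …, e₅, e₇`. -/
def M634 : Type := Fin 6 → ℝ

namespace M634

instance : AddCommGroup M634 := inferInstanceAs (AddCommGroup (Fin 6 → ℝ))
noncomputable instance : Module ℝ M634 := inferInstanceAs (Module ℝ (Fin 6 → ℝ))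
instance : IsNoetherian ℝ M634 := inferInstanceAs (IsNoetherian ℝ (Fin 6 → ℝ))

@[ext] lemma ext {x y : M634} (h : ∀ i, x i = y i) : x = y := funext h

@[simp] lemma zero_apply (i : Fin 6) : (0 : M634) i = 0 := rfl
@[simp] lemma add_apply (x y : M634) (i : Fin 6) : (x + y) i = x i + y i := rfl
@[simp] lemma neg_apply (x : M634) (i : Fin 6) : (-x) i = -x i := rfl
@[simp] lemma smul_apply (r : ℝ) (x : M634) (i : Fin 6) : (r • x) i = r * x i := rfl

instance : Bracket M634 M634 where
  bracket x y := ![0, 0, 0,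
    x 0 * y 2 - x 2 * y 0,
    x 1 * y 2 - x 2 * y 1,
    x 1 * y 4 - x 4 * y 1 + x 2 * y 3 - x 3 * y 2]

lemma lie_apply (x y : M634) (i : Fin 6) : ⁅x, y⁆ i = ![0, 0, 0,
    x 0 * y 2 - x 2 * y 0,
    x 1 * y 2 - x 2 * y 1,
    x 1 * y 4 - x 4 * y 1 + x 2 * y 3 - x 3 * y 2] i := rfl

instance : LieRing M634 where
  add_lie x y z := by ext i; fin_cases i <;> simp [lie_apply] <;> ring
  lie_add x y z := by ext i; fin_cases i <;> simp [lie_apply] <;> ring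
  lie_self x := by ext i; fin_cases i <;> simp [lie_apply, mul_comm]
  leibniz_lie x y z := by ext i; fin_cases i <;> simp [lie_apply]; ring

noncomputable instance : LieAlgebra ℝ M634 where
  lie_smul r x y := by ext i; fin_cases i <;> simp [lie_apply] <;> ring

lemma lie_lie_lie_eq_zero (a b c d : M634) : ⁅a, ⁅b, ⁅c, d⁆⁆⁆ = 0 := by
  ext i; fin_cases i <;> simp [lie_apply]

instance : LieRing.IsNilpotent M634 := by
  rw [LieAlgebra.isNilpotent_iff_forall (R := ℝ)]
  exact fun x => ⟨3, LinearMap.ext fun y => lie_lie_lie_eq_zero x x x y⟩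

noncomputable def basis : Module.Basis (Fin 6) ℝ M634 := Pi.basisFun ℝ (Fin 6)

@[simp] lemma basis_apply (i j : Fin 6) : basis i j = if j = i then 1 else 0 :=
  (congrFun (Pi.basisFun_apply ℝ (Fin 6) i) j).trans (Pi.single_apply i 1 j)

end M634

/-- Existence of the 6-dimensional real nilpotent Lie algebra `g¹` (m6_3_4) with basis
`e₁,…,e₅,e₇` (here `e 0,…,e 4, e 5`) whose only nonzero brackets are
`⁅e₁,e₃⁆ = e₄`, `⁅e₂,e₃⁆ = e₅`, `⁅e₂,e₅⁆ = e₇`, `⁅e₃,e₄⁆ = e₇`; i.e. these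
structure constants satisfy the Jacobi identity. -/
theorem stmt_5 :
    ∃ (L : Type) (_ : LieRing L) (_ : LieAlgebra ℝ L) (e : Fin 6 → L),
      LinearIndependent ℝ e ∧ Submodule.span ℝ (Set.range e) = ⊤ ∧
      LieRing.IsNilpotent L ∧
      ⁅e 0, e 2⁆ = e 3 ∧ ⁅e 1, e 2⁆ = e 4 ∧ ⁅e 1, e 4⁆ = e 5 ∧ ⁅e 2, e 3⁆ = e 5 ∧
      ⁅e 0, e 1⁆ = 0 ∧ ⁅e 0, e 3⁆ = 0 ∧ ⁅e 0, e 4⁆ = 0 ∧ ⁅e 0, e 5⁆ = 0 ∧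
      ⁅e 1, e 3⁆ = 0 ∧ ⁅e 1, e 5⁆ = 0 ∧ ⁅e 2, e 4⁆ = 0 ∧
      ⁅e 2, e 5⁆ = 0 ∧ ⁅e 3, e 4⁆ = 0 ∧ ⁅e 3, e 5⁆ = 0 ∧ ⁅e 4, e 5⁆ = 0 := by
  refine ⟨M634, inferInstance, inferInstance, M634.basis, M634.basis.linearIndependent,
    M634.basis.span_eq, inferInstance, ?_⟩
  refine ⟨?_, ?_, ?_, ?_, ?_, ?_, ?_, ?_, ?_, ?_, ?_, ?_, ?_, ?_, ?_⟩ <;>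
    · ext i; fin_cases i <;> simp [M634.lie_apply]
end

section
/- The Lie algebras g⁰ and g¹ are not isomorphic. More precisely, g⁰ and g¹ are 6-dimensional nilpotent Lie algebras with brackets as specified, and there is no Lie algebra isomorphism between them (for instance, the center of g⁰ is strictly larger than the center of g¹, or the derived subalgebra of g¹ contains an element arising from a bracket of two elements of the derived-series filtration not present in g⁰). -/
/-!
A Lie algebra isomorphism maps the center onto the center, so it preserves its dimension.
In `g⁰` both `e₄` and `e₇` are central, so the center is at least 2-dimensional. In `g¹` the
extra bracket `⁅e₃, e₄⁆ = e₇` kills `e₄`, and writing a central `z = ∑ cᵢ eᵢ` the coordinates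
of `⁅e₁, z⁆`, `⁅e₂, z⁆`, `⁅e₃, z⁆` force every `cᵢ` except `c₇` to vanish, so the center is
the line spanned by `e₇`.
-/

open Module Submodule LieAlgebra

section Center

variable {R L L' : Type*} [CommRing R] [LieRing L] [LieAlgebra R L] [LieRing L'] [LieAlgebra R L']

theorem LieAlgebra.mem_center_iff_of_span_eq_top {ι : Type*} {v : ι → L}
    (hv : span R (Set.range v) = ⊤) {x : L} : x ∈ center R L ↔ ∀ i, ⁅v i, x⁆ = 0 := by
  have hcomm (y : L) : ⁅y, x⁆ = 0 ↔ ⁅x, y⁆ = 0 := by rw [← lie_skew, neg_eq_zero]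
  simp only [LieModule.mem_maxTrivSubmodule, hcomm]
  refine ⟨fun h i => h (v i), fun h => ?_⟩
  exact LinearMap.congr_fun (LinearMap.ext_on_range hv (f := LieModule.toEnd R L L x) (g := 0) h)

theorem LieEquiv.apply_mem_center_iff (φ : L ≃ₗ⁅R⁆ L') {x : L} :
    φ x ∈ center R L' ↔ x ∈ center R L := by
  simp only [LieModule.mem_maxTrivSubmodule]
  refine ⟨fun h y => φ.injective ?_, fun h y => ?_⟩
  · simpa [← φ.map_lie] using h (φ y)
  · rw [← φ.apply_symm_apply y, ← φ.map_lie, h, map_zero]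

theorem LieEquiv.map_center (φ : L ≃ₗ⁅R⁆ L') :
    (center R L).toSubmodule.map (φ.toLinearEquiv : L →ₗ[R] L') = (center R L').toSubmodule := by
  ext y
  rw [mem_map_equiv, LieSubmodule.mem_toSubmodule, LieSubmodule.mem_toSubmodule,
    ← φ.apply_mem_center_iff]
  exact Iff.of_eq (congrArg (· ∈ center R L') (φ.toLinearEquiv.apply_symm_apply y))

theorem LieEquiv.finrank_center_eq (φ : L ≃ₗ⁅R⁆ L') :
    finrank R (center R L).toSubmodule = finrank R (center R L').toSubmodule :=
  (φ.toLinearEquiv.ofSubmodules _ _ φ.map_center).finrank_eq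

theorem Module.Basis.repr_lie_apply {ι : Type*} [Fintype ι] (b : Module.Basis ι R L) (x z : L) (j : ι) :
    b.repr ⁅x, z⁆ j = ∑ i, b.repr z i * b.repr ⁅x, b i⁆ j := by
  nth_rewrite 1 [← b.sum_repr z]
  simp only [lie_sum, lie_smul, map_sum, map_smul, Finsupp.coe_finsetSum, Finset.sum_apply,
    Finsupp.smul_apply, smul_eq_mul]

end Center

section Field

variable {K L : Type*} [Field K] [LieRing L] [LieAlgebra K L]

theorem LieAlgebra.card_le_finrank_center {ι : Type*} [Fintype ι] (b : Module.Basis ι K L)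
    (s : Finset ι) (hs : ∀ i ∈ s, b i ∈ center K L) :
    s.card ≤ finrank K (center K L).toSubmodule := by
  have : FiniteDimensional K L := .of_basis b
  have hli : LinearIndependent K (fun i : s => b i) :=
    b.linearIndependent.comp _ Subtype.val_injective
  calc s.card = finrank K (span K (Set.range fun i : s => b i)) := by
        rw [finrank_span_eq_card hli, Fintype.card_coe]
    _ ≤ _ := finrank_mono (span_le.mpr (Set.range_subset_iff.mpr fun i => hs i i.2))

theorem LieAlgebra.finrank_center_le_one {ι : Type*} [Fintype ι] (b : Module.Basis ι K L) (j : ι)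
    (h : ∀ z ∈ center K L, ∀ i ≠ j, b.repr z i = 0) :
    finrank K (center K L).toSubmodule ≤ 1 := by
  have : FiniteDimensional K L := .of_basis b
  have hle : (center K L).toSubmodule ≤ K ∙ b j := by
    intro z hz
    rw [← b.sum_repr z, Finset.sum_eq_single j (fun i _ hi => by rw [h z hz i hi, zero_smul])
      (by simp)]
    exact smul_mem _ _ (mem_span_singleton_self _)
  exact (finrank_mono hle).trans ((finrank_span_le_card _).trans (by simp))

theorem LieAlgebra.repr_eq_zero_of_mem_center_of_brackets (b : Module.Basis (Fin 6) K L)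
    (h0 : ∀ i, ⁅b 0, b i⁆ = ![0, 0, b 3, 0, 0, 0] i)
    (h1 : ∀ i, ⁅b 1, b i⁆ = ![0, 0, b 4, 0, b 5, 0] i)
    (h2 : ∀ i, ⁅b 2, b i⁆ = ![-b 3, -b 4, 0, b 5, 0, 0] i) :
    ∀ z ∈ center K L, ∀ i ≠ 5, b.repr z i = 0 := by
  intro z hz i hi
  have hzero (k j : Fin 6) : b.repr ⁅b k, z⁆ j = 0 := by
    rw [(LieModule.mem_maxTrivSubmodule K L L z).mp hz, map_zero, Finsupp.zero_apply]
  fin_cases i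
  · simpa [b.repr_lie_apply, Fin.sum_univ_six, h2] using hzero 2 3
  · simpa [b.repr_lie_apply, Fin.sum_univ_six, h2] using hzero 2 4
  · simpa [b.repr_lie_apply, Fin.sum_univ_six, h0] using hzero 0 3
  · simpa [b.repr_lie_apply, Fin.sum_univ_six, h2] using hzero 2 5
  · simpa [b.repr_lie_apply, Fin.sum_univ_six, h1] using hzero 1 5
  · exact absurd rfl hi

end Field

theorem stmt_6_general (L₀ L₁ : Type*) [LieRing L₀] [LieAlgebra ℝ L₀]
    [LieRing L₁] [LieAlgebra ℝ L₁] (e : Fin 6 → L₀) (f : Fin 6 → L₁)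
    (he : LinearIndependent ℝ e) (hes : Submodule.span ℝ (Set.range e) = ⊤)
    (hf : LinearIndependent ℝ f) (hfs : Submodule.span ℝ (Set.range f) = ⊤)
    (he14 : ⁅e 0, e 3⁆ = 0)
    (he17 : ⁅e 0, e 5⁆ = 0) (he24 : ⁅e 1, e 3⁆ = 0) (he27 : ⁅e 1, e 5⁆ = 0)
    (he34 : ⁅e 2, e 3⁆ = 0) (he37 : ⁅e 2, e 5⁆ = 0)
    (he45 : ⁅e 3, e 4⁆ = 0) (he47 : ⁅e 3, e 5⁆ = 0) (he57 : ⁅e 4, e 5⁆ = 0)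
    (hf13 : ⁅f 0, f 2⁆ = f 3) (hf23 : ⁅f 1, f 2⁆ = f 4) (hf25 : ⁅f 1, f 4⁆ = f 5)
    (hf34 : ⁅f 2, f 3⁆ = f 5)
    (hf12 : ⁅f 0, f 1⁆ = 0) (hf14 : ⁅f 0, f 3⁆ = 0) (hf15 : ⁅f 0, f 4⁆ = 0)
    (hf17 : ⁅f 0, f 5⁆ = 0) (hf24 : ⁅f 1, f 3⁆ = 0) (hf27 : ⁅f 1, f 5⁆ = 0)
    (hf35 : ⁅f 2, f 4⁆ = 0) (hf37 : ⁅f 2, f 5⁆ = 0) :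
    IsEmpty (L₀ ≃ₗ⁅ℝ⁆ L₁) := by
  refine ⟨fun φ => ?_⟩
  let b₀ := Module.Basis.mk he hes.ge
  let b₁ := Module.Basis.mk hf hfs.ge
  have hcenter₀ : 2 ≤ finrank ℝ (center ℝ L₀).toSubmodule := by
    refine card_le_finrank_center b₀ {3, 5} fun j hj => ?_
    rw [mem_center_iff_of_span_eq_top b₀.span_eq]
    simp only [Finset.mem_insert, Finset.mem_singleton] at hj
    rcases hj with rfl | rfl <;> intro i <;> fin_cases i <;>
      simp [b₀, ← lie_skew (e 4) (e 3), ← lie_skew (e 5) (e 3), he14, he17, he24, he27, he34,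
        he37, he45, he47, he57]
  have hcenter₁ : finrank ℝ (center ℝ L₁).toSubmodule ≤ 1 := by
    refine finrank_center_le_one b₁ 5 (repr_eq_zero_of_mem_center_of_brackets b₁ ?_ ?_ ?_) <;>
      intro i <;> fin_cases i <;>
      simp [b₁, ← lie_skew (f 1) (f 0), ← lie_skew (f 2) (f 0), ← lie_skew (f 2) (f 1), *]
  have := φ.finrank_center_eq
  omega

/-- The Lie algebras `g⁰` and `g¹` are not isomorphic: if `L₀` has a basis `e`
with nonzero brackets exactly `⁅e₁,e₃⁆=e₄, ⁅e₂,e₃⁆=e₅, ⁅e₂,e₅⁆=e₇` and `L₁` has a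
basis `f` with the same brackets plus `⁅f₃,f₄⁆=f₇`, then there is no Lie algebra
isomorphism `L₀ ≃ L₁`. (Indices: `e 0,…,e 4, e 5` stand for `e₁,…,e₅,e₇`.) -/
theorem stmt_6 (L₀ L₁ : Type*) [LieRing L₀] [LieAlgebra ℝ L₀]
    [LieRing L₁] [LieAlgebra ℝ L₁] (e : Fin 6 → L₀) (f : Fin 6 → L₁)
    (he : LinearIndependent ℝ e) (hes : Submodule.span ℝ (Set.range e) = ⊤)
    (hf : LinearIndependent ℝ f) (hfs : Submodule.span ℝ (Set.range f) = ⊤)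
    (he13 : ⁅e 0, e 2⁆ = e 3) (he23 : ⁅e 1, e 2⁆ = e 4) (he25 : ⁅e 1, e 4⁆ = e 5)
    (he12 : ⁅e 0, e 1⁆ = 0) (he14 : ⁅e 0, e 3⁆ = 0) (he15 : ⁅e 0, e 4⁆ = 0)
    (he17 : ⁅e 0, e 5⁆ = 0) (he24 : ⁅e 1, e 3⁆ = 0) (he27 : ⁅e 1, e 5⁆ = 0)
    (he34 : ⁅e 2, e 3⁆ = 0) (he35 : ⁅e 2, e 4⁆ = 0) (he37 : ⁅e 2, e 5⁆ = 0)
    (he45 : ⁅e 3, e 4⁆ = 0) (he47 : ⁅e 3, e 5⁆ = 0) (he57 : ⁅e 4, e 5⁆ = 0)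
    (hf13 : ⁅f 0, f 2⁆ = f 3) (hf23 : ⁅f 1, f 2⁆ = f 4) (hf25 : ⁅f 1, f 4⁆ = f 5)
    (hf34 : ⁅f 2, f 3⁆ = f 5)
    (hf12 : ⁅f 0, f 1⁆ = 0) (hf14 : ⁅f 0, f 3⁆ = 0) (hf15 : ⁅f 0, f 4⁆ = 0)
    (hf17 : ⁅f 0, f 5⁆ = 0) (hf24 : ⁅f 1, f 3⁆ = 0) (hf27 : ⁅f 1, f 5⁆ = 0)
    (hf35 : ⁅f 2, f 4⁆ = 0) (hf37 : ⁅f 2, f 5⁆ = 0)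
    (hf45 : ⁅f 3, f 4⁆ = 0) (hf47 : ⁅f 3, f 5⁆ = 0) (hf57 : ⁅f 4, f 5⁆ = 0) :
    IsEmpty (L₀ ≃ₗ⁅ℝ⁆ L₁) :=
  stmt_6_general L₀ L₁ e f he hes hf hfs he14 he17 he24 he27 he34 he37 he45 he47 he57 hf13 hf23 hf25
    hf34 hf12 hf14 hf15 hf17 hf24 hf27 hf35 hf37
end

section
/- Every symbol algebra of a non-degenerated parabolic (3,5,6)-distribution is isomorphic, as a graded Lie algebra, to exactly one of g⁰ or g¹. Formally: let g = g₋₁ ⊕ g₋₂ ⊕ g₋₃ ⊕ g₋₄ ⊕ g₋₅ ⊕ g₋₇ be a graded real Lie algebra with dim g₋ᵢ = 1 for i ∈ {1,2,3,4,5,7}, generated by g₋₁ ⊕ g₋₂ ⊕ g₋₃, with [g₋₁, g₋₂] = 0, [g₋₁, g₋₃] = g₋₄, [g₋₁, g₋₄] = 0, [g₋₂, g₋₃] = g₋₅, [g₋₂, g₋₅] = g₋₇. Then there is a basis e₁,…,e₅,e₇ with eᵢ ∈ g₋ᵢ such that the only nonzero brackets are [e₁,e₃]=e₄, [e₂,e₃]=e₅,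 [e₂,e₅]=e₇, and [e₃,e₄]=d·e₇ with d = 0 or d = 1. -/
/-!
Every piece is a line, so for generators `f₁, f₂, f₃` of `g₋₁, g₋₂, g₋₃` the bracket conditions
force `f₄ = ⁅f₁, f₃⁆`, `f₅ = ⁅f₂, f₃⁆`, `f₇ = ⁅f₂, f₅⁆` to span `g₋₄, g₋₅, g₋₇`. Then
`⁅f₃, f₄⁆ = c • f₇` by degree, and every other bracket vanishes by hypothesis or because it lands
in degree `6` or above `7`, where `g` is zero. Replacing `f₁` by `c⁻¹ • f₁` (hence `f₄` by
`c⁻¹ • f₄`) when `c ≠ 0` normalises `c` to `1`.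
-/

open Module Submodule

section LinearAlgebra

variable {K M : Type*} [DivisionRing K] [AddCommGroup M] [Module K M]

theorem exists_eq_span_singleton_of_finrank_eq_one {S : Submodule K M} (h : finrank K S = 1) :
    ∃ v, S = K ∙ v := by
  obtain ⟨v, hv, hv0⟩ := S.ne_bot_iff.mp (isAtom_iff_finrank_eq_one.mpr h).ne_bot
  exact ⟨v, eq_span_singleton_of_mem_of_finrank_eq_one h hv hv0⟩

theorem ne_zero_of_finrank_span_singleton_eq_one {v : M} (h : finrank K (K ∙ v) = 1) : v ≠ 0 := by
  rintro rfl
  rw [span_zero_singleton, finrank_bot] at h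
  exact zero_ne_one h

theorem linearIndependent_and_span_eq_top_of_eq_span_singleton {ι κ : Type*}
    {V : ι → Submodule K M} (hindep : iSupIndep V) (hsup : ⨆ i, V i = ⊤) {deg : κ → ι}
    (hdeg : Function.Injective deg) (hbot : ∀ i, i ∉ Set.range deg → V i = ⊥) {v : κ → M}
    (hv : ∀ k, V (deg k) = K ∙ v k) (hrank : ∀ k, finrank K (V (deg k)) = 1) :
    LinearIndependent K v ∧ span K (Set.range v) = ⊤ := by
  have hmem (k : κ) : v k ∈ V (deg k) := hv k ▸ mem_span_singleton_self (v k)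
  have hv0 (k : κ) : v k ≠ 0 := ne_zero_of_finrank_span_singleton_eq_one (hv k ▸ hrank k)
  refine ⟨(hindep.comp hdeg).linearIndependent _ hmem hv0, ?_⟩
  rw [eq_top_iff, ← hsup, iSup_le_iff]
  intro i
  by_cases hi : i ∈ Set.range deg
  · obtain ⟨k, rfl⟩ := hi
    rw [hv k, span_singleton_le_iff_mem]
    exact subset_span (Set.mem_range_self k)
  · simp [hbot i hi]

end LinearAlgebra

theorem exists_ne_zero_mul_eq_zero_or_one {K : Type*} [GroupWithZero K] (c : K) :
    ∃ α ≠ 0, α * c = 0 ∨ α * c = 1 := by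
  rcases eq_or_ne c 0 with rfl | hc
  · exact ⟨1, one_ne_zero, Or.inl (mul_zero 1)⟩
  · exact ⟨c⁻¹, inv_ne_zero hc, Or.inr (inv_mul_cancel₀ hc)⟩

section LieAlgebra

variable {R L : Type*} [CommRing R] [LieRing L] [LieAlgebra R L]

theorem span_lie_span_singleton (a b : L) :
    span R {z | ∃ x ∈ R ∙ a, ∃ y ∈ R ∙ b, ⁅x, y⁆ = z} = R ∙ ⁅a, b⁆ := by
  apply le_antisymm
  · rw [span_le]
    rintro _ ⟨x, hx, y, hy, rfl⟩
    obtain ⟨r, rfl⟩ := mem_span_singleton.mp hx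
    obtain ⟨s, rfl⟩ := mem_span_singleton.mp hy
    rw [smul_lie, lie_smul]
    exact smul_mem _ _ (smul_mem _ _ (mem_span_singleton_self _))
  · rw [span_singleton_le_iff_mem]
    exact subset_span ⟨a, mem_span_singleton_self a, b, mem_span_singleton_self b, rfl⟩

theorem lie_eq_zero_of_mem_of_eq_bot {ι : Type*} [Add ι] {V : ι → Submodule R L}
    (hgrade : ∀ i j, ∀ x ∈ V i, ∀ y ∈ V j, ⁅x, y⁆ ∈ V (i + j)) {i j : ι} (hij : V (i + j) = ⊥)
    {x y : L} (hx : x ∈ V i) (hy : y ∈ V j) : ⁅x, y⁆ = 0 := by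
  simpa [hij] using hgrade i j x hx y hy

end LieAlgebra

theorem exists_eq_span_singleton_of_span_lie {K L : Type*} [Field K] [LieRing L] [LieAlgebra K L]
    {V : ℕ → Submodule K L} (h1 : finrank K (V 1) = 1) (h2 : finrank K (V 2) = 1)
    (h3 : finrank K (V 3) = 1)
    (h13 : span K {z | ∃ x ∈ V 1, ∃ y ∈ V 3, ⁅x, y⁆ = z} = V 4)
    (h23 : span K {z | ∃ x ∈ V 2, ∃ y ∈ V 3, ⁅x, y⁆ = z} = V 5)
    (h25 : span K {z | ∃ x ∈ V 2, ∃ y ∈ V 5, ⁅x, y⁆ = z} = V 7) :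
    ∃ f₁ f₂ f₃ : L, V 1 = K ∙ f₁ ∧ V 2 = K ∙ f₂ ∧ V 3 = K ∙ f₃ ∧ V 4 = K ∙ ⁅f₁, f₃⁆ ∧
      V 5 = K ∙ ⁅f₂, f₃⁆ ∧ V 7 = K ∙ ⁅f₂, ⁅f₂, f₃⁆⁆ := by
  obtain ⟨f₁, hV1⟩ := exists_eq_span_singleton_of_finrank_eq_one h1
  obtain ⟨f₂, hV2⟩ := exists_eq_span_singleton_of_finrank_eq_one h2
  obtain ⟨f₃, hV3⟩ := exists_eq_span_singleton_of_finrank_eq_one h3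
  have hV5 : V 5 = K ∙ ⁅f₂, f₃⁆ := by rw [← h23, hV2, hV3, span_lie_span_singleton]
  refine ⟨f₁, f₂, f₃, hV1, hV2, hV3, ?_, hV5, ?_⟩
  · rw [← h13, hV1, hV3, span_lie_span_singleton]
  · rw [← h25, hV2, hV5, span_lie_span_singleton]

theorem stmt_8_general (g : Type*) [LieRing g] [LieAlgebra ℝ g] (V : ℕ → Submodule ℝ g)
    (hdim : ∀ i, i ∈ ({1, 2, 3, 4, 5, 7} : Set ℕ) → Module.finrank ℝ (V i) = 1)
    (hbot : ∀ i, i ∉ ({1, 2, 3, 4, 5, 7} : Set ℕ) → V i = ⊥)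
    (hindep : iSupIndep V) (hsup : ⨆ i, V i = ⊤)
    (hgrade : ∀ i j, ∀ x ∈ V i, ∀ y ∈ V j, ⁅x, y⁆ ∈ V (i + j))
    (h12 : ∀ x ∈ V 1, ∀ y ∈ V 2, ⁅x, y⁆ = 0)
    (h13 : Submodule.span ℝ {z : g | ∃ x ∈ V 1, ∃ y ∈ V 3, ⁅x, y⁆ = z} = V 4)
    (h14 : ∀ x ∈ V 1, ∀ y ∈ V 4, ⁅x, y⁆ = 0)
    (h23 : Submodule.span ℝ {z : g | ∃ x ∈ V 2, ∃ y ∈ V 3, ⁅x, y⁆ = z} = V 5)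
    (h25 : Submodule.span ℝ {z : g | ∃ x ∈ V 2, ∃ y ∈ V 5, ⁅x, y⁆ = z} = V 7) :
    ∃ d : ℝ, (d = 0 ∨ d = 1) ∧ ∃ e₁ e₂ e₃ e₄ e₅ e₇ : g,
      e₁ ∈ V 1 ∧ e₂ ∈ V 2 ∧ e₃ ∈ V 3 ∧ e₄ ∈ V 4 ∧ e₅ ∈ V 5 ∧ e₇ ∈ V 7 ∧
      LinearIndependent ℝ ![e₁, e₂, e₃, e₄, e₅, e₇] ∧
      Submodule.span ℝ {e₁, e₂, e₃, e₄, e₅, e₇} = ⊤ ∧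
      ⁅e₁, e₃⁆ = e₄ ∧ ⁅e₂, e₃⁆ = e₅ ∧ ⁅e₂, e₅⁆ = e₇ ∧ ⁅e₃, e₄⁆ = d • e₇ ∧
      ⁅e₁, e₂⁆ = 0 ∧ ⁅e₁, e₄⁆ = 0 ∧ ⁅e₁, e₅⁆ = 0 ∧ ⁅e₁, e₇⁆ = 0 ∧
      ⁅e₂, e₄⁆ = 0 ∧ ⁅e₂, e₇⁆ = 0 ∧ ⁅e₃, e₅⁆ = 0 ∧ ⁅e₃, e₇⁆ = 0 ∧
      ⁅e₄, e₅⁆ = 0 ∧ ⁅e₄, e₇⁆ = 0 ∧ ⁅e₅, e₇⁆ = 0 := by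
  obtain ⟨f₁, f₂, f₃, hV1, hV2, hV3, hV4, hV5, hV7⟩ := exists_eq_span_singleton_of_span_lie
    (hdim 1 (by simp)) (hdim 2 (by simp)) (hdim 3 (by simp)) h13 h23 h25
  have mem {W : Submodule ℝ g} {v : g} (hW : W = ℝ ∙ v) : v ∈ W := hW ▸ mem_span_singleton_self v
  obtain ⟨c, hc⟩ : ∃ c : ℝ, c • ⁅f₂, ⁅f₂, f₃⁆⁆ = ⁅f₃, ⁅f₁, f₃⁆⁆ :=
    mem_span_singleton.mp (hV7 ▸ hgrade 3 4 _ (mem hV3) _ (mem hV4))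
  obtain ⟨α, hα, hd⟩ := exists_ne_zero_mul_eq_zero_or_one c
  have hsmul {W : Submodule ℝ g} {v : g} (hW : W = ℝ ∙ v) : W = ℝ ∙ (α • v) :=
    hW.trans (span_singleton_smul_eq (IsUnit.mk0 α hα) v).symm
  obtain ⟨hli, hspan⟩ := linearIndependent_and_span_eq_top_of_eq_span_singleton hindep hsup
    (deg := ![1, 2, 3, 4, 5, 7]) (v := ![α • f₁, f₂, f₃, α • ⁅f₁, f₃⁆, ⁅f₂, f₃⁆, ⁅f₂, ⁅f₂, f₃⁆⁆])
    (by decide) (fun i hi => hbot i (by simpa only [Matrix.range_cons, Matrix.range_empty,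
      Set.union_empty, Set.singleton_union] using hi))
    (fun k => by fin_cases k; exacts [hsmul hV1, hV2, hV3, hsmul hV4, hV5, hV7])
    (fun k => hdim _ (by fin_cases k <;> simp))
  simp only [Matrix.range_cons, Matrix.range_empty, Set.union_empty, Set.singleton_union]
    at hspan
  have hzero {i j : ℕ} {x y : g} (hij : i + j ∉ ({1, 2, 3, 4, 5, 7} : Set ℕ)) (hx : x ∈ V i)
      (hy : y ∈ V j) : ⁅x, y⁆ = 0 :=
    lie_eq_zero_of_mem_of_eq_bot hgrade (hbot _ hij) hx hy
  have he₁ := mem (hsmul hV1)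
  have he₂ := mem hV2
  have he₃ := mem hV3
  have he₄ := mem (hsmul hV4)
  have he₅ := mem hV5
  have he₇ := mem hV7
  refine ⟨α * c, hd, α • f₁, f₂, f₃, α • ⁅f₁, f₃⁆, ⁅f₂, f₃⁆, ⁅f₂, ⁅f₂, f₃⁆⁆,
    he₁, he₂, he₃, he₄, he₅, he₇, hli, hspan, smul_lie .., rfl, rfl,
    by rw [lie_smul, ← hc, smul_smul], h12 _ he₁ _ he₂, h14 _ he₁ _ he₄, ?_, ?_, ?_, ?_, ?_, ?_, ?_,
    ?_, ?_⟩
  exacts [hzero (by simp) he₁ he₅, hzero (by simp) he₁ he₇, hzero (by simp) he₂ he₄,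
    hzero (by simp) he₂ he₇, hzero (by simp) he₃ he₅, hzero (by simp) he₃ he₇,
    hzero (by simp) he₄ he₅, hzero (by simp) he₄ he₇, hzero (by simp) he₅ he₇]

/-- Classification of symbol algebras of non-degenerated parabolic (3,5,6)-distributions:
a graded real Lie algebra `g = g₋₁ ⊕ g₋₂ ⊕ g₋₃ ⊕ g₋₄ ⊕ g₋₅ ⊕ g₋₇` with one-dimensional
pieces, generated by `g₋₁ ⊕ g₋₂ ⊕ g₋₃`, with `[g₋₁,g₋₂]=0`, `[g₋₁,g₋₃]=g₋₄`,
`[g₋₁,g₋₄]=0`, `[g₋₂,g₋₃]=g₋₅`, `[g₋₂,g₋₅]=g₋₇`, admits a basis `e₁,…,e₅,e₇`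
(`eᵢ ∈ g₋ᵢ`) whose only nonzero brackets are `⁅e₁,e₃⁆=e₄`, `⁅e₂,e₃⁆=e₅`,
`⁅e₂,e₅⁆=e₇`, `⁅e₃,e₄⁆=d•e₇` with `d = 0` or `d = 1`; i.e. `g ≅ g⁰` or `g ≅ g¹`. -/
theorem stmt_8 (g : Type*) [LieRing g] [LieAlgebra ℝ g] (V : ℕ → Submodule ℝ g)
    (hdim : ∀ i, i ∈ ({1, 2, 3, 4, 5, 7} : Set ℕ) → Module.finrank ℝ (V i) = 1)
    (hbot : ∀ i, i ∉ ({1, 2, 3, 4, 5, 7} : Set ℕ) → V i = ⊥)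
    (hindep : iSupIndep V) (hsup : ⨆ i, V i = ⊤)
    (hgrade : ∀ i j, ∀ x ∈ V i, ∀ y ∈ V j, ⁅x, y⁆ ∈ V (i + j))
    (hgen : LieSubalgebra.lieSpan ℝ g ((V 1 ⊔ V 2 ⊔ V 3 : Submodule ℝ g) : Set g) = ⊤)
    (h12 : ∀ x ∈ V 1, ∀ y ∈ V 2, ⁅x, y⁆ = 0)
    (h13 : Submodule.span ℝ {z : g | ∃ x ∈ V 1, ∃ y ∈ V 3, ⁅x, y⁆ = z} = V 4)
    (h14 : ∀ x ∈ V 1, ∀ y ∈ V 4, ⁅x, y⁆ = 0)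
    (h23 : Submodule.span ℝ {z : g | ∃ x ∈ V 2, ∃ y ∈ V 3, ⁅x, y⁆ = z} = V 5)
    (h25 : Submodule.span ℝ {z : g | ∃ x ∈ V 2, ∃ y ∈ V 5, ⁅x, y⁆ = z} = V 7) :
    ∃ d : ℝ, (d = 0 ∨ d = 1) ∧ ∃ e₁ e₂ e₃ e₄ e₅ e₇ : g,
      e₁ ∈ V 1 ∧ e₂ ∈ V 2 ∧ e₃ ∈ V 3 ∧ e₄ ∈ V 4 ∧ e₅ ∈ V 5 ∧ e₇ ∈ V 7 ∧
      LinearIndependent ℝ ![e₁, e₂, e₃, e₄, e₅, e₇] ∧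
      Submodule.span ℝ {e₁, e₂, e₃, e₄, e₅, e₇} = ⊤ ∧
      ⁅e₁, e₃⁆ = e₄ ∧ ⁅e₂, e₃⁆ = e₅ ∧ ⁅e₂, e₅⁆ = e₇ ∧ ⁅e₃, e₄⁆ = d • e₇ ∧
      ⁅e₁, e₂⁆ = 0 ∧ ⁅e₁, e₄⁆ = 0 ∧ ⁅e₁, e₅⁆ = 0 ∧ ⁅e₁, e₇⁆ = 0 ∧
      ⁅e₂, e₄⁆ = 0 ∧ ⁅e₂, e₇⁆ = 0 ∧ ⁅e₃, e₅⁆ = 0 ∧ ⁅e₃, e₇⁆ = 0 ∧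
      ⁅e₄, e₅⁆ = 0 ∧ ⁅e₄, e₇⁆ = 0 ∧ ⁅e₅, e₇⁆ = 0 :=
  stmt_8_general g V hdim hbot hindep hsup hgrade h12 h13 h14 h23 h25
end

section
/- Let B₃ be a rank-3 distribution on a 5-manifold N with [B₃,B₃] of rank 4 or 5 and [B₃,[B₃,B₃]] = TN, and suppose there is a rank-1 subdistribution B₁ ⊂ B₃ with [B₁,B₃] of rank 4 and [B₁,[B₁,B₃]] = TN. Then there exists a unique rank-2 subdistribution B₂ with B₁ ⊆ B₂ ⊆ B₃ and [B₂,B₂] ⊆ B₃, given pointwise by B₂(x) = {v ∈ B₃(x) : [X, V](x) ∈ B₃(x) for V extending v}, where X spans B₁. -/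
/-!
Sections of `B₃ = span (Vᵢ)` have coefficients in the frame that are differentiable at `p`
(invert the frame near `p`), so by the Leibniz rule `[A, B](p)` modulo `B₃(p)` depends only on
`A(p)` and `B(p)`: it is the alternating form `∑ αᵢ βⱼ [Vᵢ, Vⱼ](p)` of their coordinates. In
particular `v ↦ [X, V](p) mod B₃(p)` is a well-defined linear map on `B₃(p)`; its kernel `B₂(p)`
contains `X(p)`, and its image `[B₁, B₃](p) / B₃(p)` is a line, so `B₂(p)` is a plane. On that
plane the alternating form has the nonzero vector `X(p)` in its radical, hence vanishes:
`[B₂, B₂] ⊆ B₃`. Conversely an involutive plane field `B₂' ∋ X` inside `B₃` has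
`[X, B₂'] ⊆ B₃`, so `B₂' ⊆ B₂`, with equality by dimension.
-/

noncomputable def vfLie {E : Type*} [NormedAddCommGroup E] [NormedSpace ℝ E]
    (V W : E → E) : E → E :=
  fun x => fderiv ℝ W x (V x) - fderiv ℝ V x (W x)

open Module Topology

section VectorFields

variable {E : Type*} [NormedAddCommGroup E] [NormedSpace ℝ E] {ι : Type*} [Fintype ι]

theorem vfLie_swap (V W : E → E) : vfLie V W = -vfLie W V := by
  funext x; simp [vfLie]

theorem vfLie_self (V : E → E) : vfLie V V = 0 := by
  funext x; simp [vfLie]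

theorem vfLie_sum_smul_right (X : E → E) {V : ι → E → E} {p : E}
    (hV : ∀ j, DifferentiableAt ℝ (V j) p) (c : ι → ℝ) :
    vfLie X (fun q => ∑ j, c j • V j q) p = ∑ j, c j • vfLie X (V j) p := by
  have hD : HasFDerivAt (fun q => ∑ j, c j • V j q) (∑ j, c j • fderiv ℝ (V j) p) p :=
    HasFDerivAt.fun_sum fun j _ => (hV j).hasFDerivAt.const_smul (c j)
  simp [vfLie, hD.fderiv, smul_sub, Finset.sum_sub_distrib]

noncomputable def frameSpan (V : ι → E → E) (p : E) : Submodule ℝ E :=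
  Submodule.span ℝ (Set.range (V · p))

theorem sum_smul_mem_frameSpan (V : ι → E → E) (p : E) (c : ι → ℝ) :
    ∑ j, c j • V j p ∈ frameSpan V p :=
  Submodule.sum_mem _ fun j _ => Submodule.smul_mem _ _ (Submodule.subset_span ⟨j, rfl⟩)

theorem exists_sum_smul_eq_of_mem_frameSpan {V : ι → E → E} {p v : E}
    (hv : v ∈ frameSpan V p) : ∃ c : ι → ℝ, ∑ j, c j • V j p = v :=
  (Submodule.mem_span_range_iff_exists_fun ℝ).mp hv

variable {V : ι → E → E} {p : E}

theorem coeffs_eq_of_linearIndependent (hli : LinearIndependent ℝ (V · p)) {α β : ι → ℝ}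
    (h : ∑ j, α j • V j p = ∑ j, β j • V j p) : α = β := by
  simp only [← Fintype.linearCombination_apply] at h
  exact linearIndependent_iff_injective_fintypeLinearCombination.mp hli h

noncomputable def frameBracket (V : ι → E → E) (p : E) : (ι → ℝ) →ₗ[ℝ] (ι → ℝ) →ₗ[ℝ] E :=
  Fintype.linearCombination ℝ fun i => Fintype.linearCombination ℝ fun j => vfLie (V i) (V j) p

theorem frameBracket_apply (α β : ι → ℝ) :
    frameBracket V p α β = ∑ i, α i • ∑ j, β j • vfLie (V i) (V j) p := by
  simp [frameBracket, Fintype.linearCombination_apply]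

theorem frameBracket_isAlt : (frameBracket V p).IsAlt := by
  intro α
  have := IsAddTorsionFree.of_isTorsionFree ℝ E
  rw [← self_eq_neg]
  simp only [frameBracket_apply, Finset.smul_sum, smul_smul]
  conv_rhs => rw [Finset.sum_comm]
  simp only [← Finset.sum_neg_distrib, ← smul_neg, ← Pi.neg_apply (f := vfLie _ _), ← vfLie_swap,
    mul_comm]

variable [FiniteDimensional ℝ E]

theorem exists_coeffs_differentiableAt (hV : ∀ i, DifferentiableAt ℝ (V i) p)
    (hli : LinearIndependent ℝ (V · p)) {A : E → E} (hA : DifferentiableAt ℝ A p)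
    (hAV : ∀ q, A q ∈ frameSpan V q) :
    ∃ a : E → ι → ℝ, DifferentiableAt ℝ a p ∧ ∀ᶠ q in 𝓝 p, A q = ∑ j, a q j • V j q := by
  obtain ⟨π, hπ⟩ := (Fintype.linearCombination ℝ (V · p)).exists_leftInverse_of_injective
    (LinearMap.ker_eq_bot.mpr (linearIndependent_iff_injective_fintypeLinearCombination.mp hli))
  let π' := LinearMap.toContinuousLinearMap π
  -- `T q c = π (∑ j, c j • V j q)` and `T p = 1`; inverting `T q` near `p` recovers the
  -- coefficients of `A q`.
  let T : E → (ι → ℝ) →L[ℝ] (ι → ℝ) := fun q =>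
    ∑ j, ContinuousLinearMap.smulRightL ℝ (ι → ℝ) (ι → ℝ) (ContinuousLinearMap.proj j) (π' (V j q))
  have hT : ∀ q c, T q c = π' (∑ j, c j • V j q) := by
    intro q c; simp [T, π', map_sum, map_smul]
  have hTp : T p = 1 := ContinuousLinearMap.ext fun c => by
    rw [hT, ← Fintype.linearCombination_apply]
    exact LinearMap.congr_fun hπ c
  have hTd : DifferentiableAt ℝ T p := DifferentiableAt.fun_sum fun j _ =>
    (ContinuousLinearMap.differentiableAt _).comp p (π'.differentiableAt.comp p (hV j))
  have hunit : ∀ᶠ q in 𝓝 p, IsUnit (T q) :=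
    hTd.continuousAt.eventually_mem (Units.isOpen.mem_nhds (hTp ▸ isUnit_one))
  refine ⟨fun q => Ring.inverse (T q) (π' (A q)),
    ((differentiableAt_inverse (hTp ▸ isUnit_one)).comp p hTd).clm_apply
      (π'.differentiableAt.comp p hA), ?_⟩
  filter_upwards [hunit] with q hq
  obtain ⟨c, hc⟩ := exists_sum_smul_eq_of_mem_frameSpan (hAV q)
  have hcq : Ring.inverse (T q) (π' (A q)) = c := by
    rw [← hc, ← hT, ← mul_apply_eq_comp, Ring.inverse_mul_cancel _ hq, one_apply_eq_self]
  rw [hcq, hc]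

theorem fderiv_sub_sum_mem_frameSpan (hV : ∀ i, DifferentiableAt ℝ (V i) p)
    (hli : LinearIndependent ℝ (V · p)) {A : E → E} (hA : DifferentiableAt ℝ A p)
    (hAV : ∀ q, A q ∈ frameSpan V q) {α : ι → ℝ} (hα : ∑ j, α j • V j p = A p) (u : E) :
    fderiv ℝ A p u - ∑ j, α j • fderiv ℝ (V j) p u ∈ frameSpan V p := by
  obtain ⟨a, ha, hAa⟩ := exists_coeffs_differentiableAt hV hli hA hAV
  have hαa : α = a p := coeffs_eq_of_linearIndependent hli (hα.trans hAa.self_of_nhds)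
  have hD := (HasFDerivAt.fun_sum fun j _ =>
    ((ContinuousLinearMap.proj j).hasFDerivAt.comp p ha.hasFDerivAt).smul
      (hV j).hasFDerivAt).congr_of_eventuallyEq hAa
  rw [hD.fderiv, hαa]
  simp only [sum_apply, add_apply, smul_apply, ContinuousLinearMap.smulRight_apply,
    Finset.sum_add_distrib, add_sub_cancel_left]
  exact sum_smul_mem_frameSpan V p _

theorem vfLie_sub_sum_mem_frameSpan_left (hV : ∀ i, DifferentiableAt ℝ (V i) p)
    (hli : LinearIndependent ℝ (V · p)) {A : E → E} (hA : DifferentiableAt ℝ A p)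
    (hAV : ∀ q, A q ∈ frameSpan V q) {α : ι → ℝ} (hα : ∑ j, α j • V j p = A p) (B : E → E) :
    vfLie A B p - ∑ j, α j • vfLie (V j) B p ∈ frameSpan V p := by
  convert neg_mem (fderiv_sub_sum_mem_frameSpan hV hli hA hAV hα (B p)) using 1
  simp only [vfLie, ← hα, map_sum, map_smul, smul_sub, Finset.sum_sub_distrib]
  abel

theorem vfLie_sub_sum_mem_frameSpan_right (hV : ∀ i, DifferentiableAt ℝ (V i) p)
    (hli : LinearIndependent ℝ (V · p)) {A : E → E} (hA : DifferentiableAt ℝ A p)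
    (hAV : ∀ q, A q ∈ frameSpan V q) {α : ι → ℝ} (hα : ∑ j, α j • V j p = A p) (B : E → E) :
    vfLie B A p - ∑ j, α j • vfLie B (V j) p ∈ frameSpan V p := by
  convert neg_mem (vfLie_sub_sum_mem_frameSpan_left hV hli hA hAV hα B) using 1
  simp only [vfLie_swap B, Pi.neg_apply, smul_neg, Finset.sum_neg_distrib]
  abel

theorem vfLie_sub_frameBracket_mem_frameSpan (hV : ∀ i, DifferentiableAt ℝ (V i) p)
    (hli : LinearIndependent ℝ (V · p)) {A B : E → E} (hA : DifferentiableAt ℝ A p)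
    (hB : DifferentiableAt ℝ B p) (hAV : ∀ q, A q ∈ frameSpan V q)
    (hBV : ∀ q, B q ∈ frameSpan V q) {α β : ι → ℝ} (hα : ∑ j, α j • V j p = A p)
    (hβ : ∑ j, β j • V j p = B p) :
    vfLie A B p - frameBracket V p α β ∈ frameSpan V p := by
  have hsplit : vfLie A B p - frameBracket V p α β = (vfLie A B p - ∑ i, α i • vfLie (V i) B p) +
      ∑ i, α i • (vfLie (V i) B p - ∑ j, β j • vfLie (V i) (V j) p) := by
    simp only [frameBracket_apply, smul_sub, Finset.sum_sub_distrib]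
    abel
  rw [hsplit]
  exact add_mem (vfLie_sub_sum_mem_frameSpan_left hV hli hA hAV hα B)
    (sum_mem fun i _ => Submodule.smul_mem _ _
      (vfLie_sub_sum_mem_frameSpan_right hV hli hB hBV hβ (V i)))

end VectorFields

theorem LinearMap.IsAlt.apply_eq_zero_of_finrank_eq_two {K M N : Type*} [Field K]
    [AddCommGroup M] [Module K M] [AddCommGroup N] [Module K N] {f : M →ₗ[K] M →ₗ[K] N}
    (hf : f.IsAlt) {U : Submodule K M} (hU : finrank K U = 2) {ξ : M} (hξU : ξ ∈ U)
    (hξ : ξ ≠ 0) (hξf : ∀ y ∈ U, f ξ y = 0) {x y : M} (hx : x ∈ U) (hy : y ∈ U) :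
    f x y = 0 := by
  by_cases hxξ : ∃ t : K, t • ξ = x
  · obtain ⟨t, rfl⟩ := hxξ
    simp [hξf y hy]
  · have : FiniteDimensional K U := .of_finrank_pos (by omega)
    have hli : LinearIndependent K ![ξ, x] :=
      (LinearIndependent.pair_iff' hξ).mpr fun t ht => hxξ ⟨t, ht⟩
    have hspan : Submodule.span K {ξ, x} = U := by
      refine Submodule.eq_of_le_of_finrank_eq ?_ ?_
      · rw [Submodule.span_le]; exact Set.insert_subset hξU (Set.singleton_subset_iff.mpr hx)
      · rw [← Matrix.range_cons_cons_empty ξ x ![], finrank_span_eq_card hli, hU]; rfl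
    obtain ⟨s, t, rfl⟩ := Submodule.mem_span_pair.mp (hspan ▸ hy)
    simp [hf.self_eq_zero, ← hf.neg ξ x, hξf x hx]

section BracketKernel

variable {E : Type*} [NormedAddCommGroup E] [NormedSpace ℝ E] {ι : Type*} [Fintype ι]

noncomputable def bracketKernelCoords (X : E → E) (V : ι → E → E) (p : E) :
    Submodule ℝ (ι → ℝ) :=
  (frameSpan V p).comap (Fintype.linearCombination ℝ fun j => vfLie X (V j) p)

noncomputable def bracketKernel (X : E → E) (V : ι → E → E) (p : E) : Submodule ℝ E :=
  (bracketKernelCoords X V p).map (Fintype.linearCombination ℝ (V · p))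

variable {X : E → E} {V : ι → E → E} {p : E}

theorem mem_bracketKernelCoords {c : ι → ℝ} :
    c ∈ bracketKernelCoords X V p ↔ ∑ j, c j • vfLie X (V j) p ∈ frameSpan V p := by
  simp [bracketKernelCoords, Fintype.linearCombination_apply]

theorem bracketKernel_le_frameSpan : bracketKernel X V p ≤ frameSpan V p := by
  rintro _ ⟨c, -, rfl⟩
  simpa [Fintype.linearCombination_apply] using sum_smul_mem_frameSpan V p c

theorem sum_smul_mem_bracketKernel_iff (hli : LinearIndependent ℝ (V · p)) {c : ι → ℝ} :
    ∑ j, c j • V j p ∈ bracketKernel X V p ↔ c ∈ bracketKernelCoords X V p := by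
  rw [← Fintype.linearCombination_apply, bracketKernel, ← SetLike.mem_coe, Submodule.map_coe,
    (linearIndependent_iff_injective_fintypeLinearCombination.mp hli).mem_set_image,
    SetLike.mem_coe]

theorem finrank_bracketKernel (hli : LinearIndependent ℝ (V · p)) :
    finrank ℝ (bracketKernel X V p) = finrank ℝ (bracketKernelCoords X V p) :=
  (Submodule.equivMapOfInjective _
    (linearIndependent_iff_injective_fintypeLinearCombination.mp hli) _).finrank_eq.symm

end BracketKernel

theorem Submodule.finrank_map_mkQ_add_finrank {K V : Type*} [DivisionRing K] [AddCommGroup V]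
    [Module K V] [FiniteDimensional K V] (S T : Submodule K V) :
    finrank K (T.map S.mkQ) + finrank K S = finrank K ↥(S ⊔ T) := by
  have hmap : (S ⊔ T).map S.mkQ = T.map S.mkQ := by
    rw [Submodule.map_sup, Submodule.mkQ_map_self, bot_sup_eq]
  have hker : finrank K (S.comap (S ⊔ T).subtype) = finrank K S :=
    (Submodule.comapSubtypeEquivOfLe le_sup_left).finrank_eq
  have := LinearMap.finrank_range_add_finrank_ker (S.mkQ ∘ₗ (S ⊔ T).subtype)
  rwa [LinearMap.range_comp, Submodule.range_subtype, hmap, LinearMap.ker_comp,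
    Submodule.ker_mkQ, hker] at this

section BracketKernelProperties

variable {E : Type*} [NormedAddCommGroup E] [NormedSpace ℝ E] [FiniteDimensional ℝ E]
  {ι : Type*} [Fintype ι] {X : E → E} {V : ι → E → E} {p : E}

theorem finrank_bracketKernel_add_one (hli : LinearIndependent ℝ (V · p))
    (h : finrank ℝ ↥(frameSpan V p ⊔ Submodule.span ℝ (Set.range fun j => vfLie X (V j) p)) =
      Fintype.card ι + 1) :
    finrank ℝ (bracketKernel X V p) + 1 = Fintype.card ι := by
  let Ψ := Fintype.linearCombination ℝ fun j => vfLie X (V j) p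
  have hker : LinearMap.ker ((frameSpan V p).mkQ ∘ₗ Ψ) = bracketKernelCoords X V p := by
    rw [LinearMap.ker_comp, Submodule.ker_mkQ]; rfl
  have hquot := Submodule.finrank_map_mkQ_add_finrank (frameSpan V p) (LinearMap.range Ψ)
  rw [Fintype.range_linearCombination, h, show finrank ℝ (frameSpan V p) = Fintype.card ι from
    finrank_span_eq_card hli] at hquot
  have := LinearMap.finrank_range_add_finrank_ker ((frameSpan V p).mkQ ∘ₗ Ψ)
  rw [LinearMap.range_comp, hker, Module.finrank_fintype_fun_eq_card,
    Fintype.range_linearCombination] at this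
  rw [finrank_bracketKernel hli]
  omega

theorem vfLie_mem_frameSpan_iff_mem_bracketKernel (hV : ∀ i, DifferentiableAt ℝ (V i) p)
    (hli : LinearIndependent ℝ (V · p)) {A : E → E} (hA : DifferentiableAt ℝ A p)
    (hAV : ∀ q, A q ∈ frameSpan V q) :
    vfLie X A p ∈ frameSpan V p ↔ A p ∈ bracketKernel X V p := by
  obtain ⟨α, hα⟩ := exists_sum_smul_eq_of_mem_frameSpan (hAV p)
  rw [← hα, sum_smul_mem_bracketKernel_iff hli, mem_bracketKernelCoords,
    ← sub_add_cancel (vfLie X A p) (∑ j, α j • vfLie X (V j) p),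
    Submodule.add_mem_iff_right _ (vfLie_sub_sum_mem_frameSpan_right hV hli hA hAV hα X)]

theorem coe_bracketKernel {n : WithTop ℕ∞} (hn : n ≠ 0) (hV : ∀ i, ContDiff ℝ n (V i))
    (hli : LinearIndependent ℝ (V · p)) :
    (bracketKernel X V p : Set E) = {v | v ∈ frameSpan V p ∧
      ∀ A : E → E, ContDiff ℝ n A → (∀ q, A q ∈ frameSpan V q) → A p = v →
        vfLie X A p ∈ frameSpan V p} := by
  have hVp i := (hV i).differentiable hn p
  ext v
  refine ⟨fun hv => ⟨bracketKernel_le_frameSpan hv, fun A hA hAV hAv => ?_⟩, fun ⟨hv, hext⟩ => ?_⟩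
  · exact (vfLie_mem_frameSpan_iff_mem_bracketKernel hVp hli (hA.differentiable hn p) hAV).mpr
      (hAv ▸ hv)
  · obtain ⟨c, rfl⟩ := exists_sum_smul_eq_of_mem_frameSpan hv
    have hC : ContDiff ℝ n fun q => ∑ j, c j • V j q :=
      ContDiff.sum fun j _ => (hV j).const_smul (c j)
    exact (vfLie_mem_frameSpan_iff_mem_bracketKernel hVp hli (hC.differentiable hn p)
      (fun q => sum_smul_mem_frameSpan V q c)).mp
      (hext _ hC (fun q => sum_smul_mem_frameSpan V q c) rfl)

theorem mem_bracketKernel_self (hV : ∀ i, DifferentiableAt ℝ (V i) p)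
    (hli : LinearIndependent ℝ (V · p)) (hX : DifferentiableAt ℝ X p)
    (hXV : ∀ q, X q ∈ frameSpan V q) : X p ∈ bracketKernel X V p :=
  (vfLie_mem_frameSpan_iff_mem_bracketKernel hV hli hX hXV).mp (by simp [vfLie_self])

theorem vfLie_mem_frameSpan_of_mem_bracketKernel (hV : ∀ i, DifferentiableAt ℝ (V i) p)
    (hli : LinearIndependent ℝ (V · p)) (hX : DifferentiableAt ℝ X p)
    (hXV : ∀ q, X q ∈ frameSpan V q) (hX0 : X p ≠ 0)
    (hrank : finrank ℝ (bracketKernel X V p) = 2) {A B : E → E} (hA : DifferentiableAt ℝ A p)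
    (hB : DifferentiableAt ℝ B p) (hAV : ∀ q, A q ∈ frameSpan V q)
    (hBV : ∀ q, B q ∈ frameSpan V q) (hAW : A p ∈ bracketKernel X V p)
    (hBW : B p ∈ bracketKernel X V p) :
    vfLie A B p ∈ frameSpan V p := by
  obtain ⟨α, hα⟩ := exists_sum_smul_eq_of_mem_frameSpan (hAV p)
  obtain ⟨β, hβ⟩ := exists_sum_smul_eq_of_mem_frameSpan (hBV p)
  obtain ⟨ξ, hξ⟩ := exists_sum_smul_eq_of_mem_frameSpan (hXV p)
  have hXW := mem_bracketKernel_self hV hli hX hXV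
  rw [← hα, sum_smul_mem_bracketKernel_iff hli] at hAW
  rw [← hβ, sum_smul_mem_bracketKernel_iff hli] at hBW
  rw [← hξ, sum_smul_mem_bracketKernel_iff hli] at hXW
  have hξ0 : ξ ≠ 0 := by rintro rfl; simp [← hξ] at hX0
  let f := (frameBracket V p).compr₂ (frameSpan V p).mkQ
  have hf : f.IsAlt := fun c => by simp [f, frameBracket_isAlt.self_eq_zero]
  -- Modulo `B₃(p)`, `f ξ d` is `[X, ∑ dⱼ Vⱼ](p) = ∑ dⱼ [X, Vⱼ](p)`.
  have hξf : ∀ d ∈ bracketKernelCoords X V p, f ξ d = 0 := by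
    intro d hd
    have hD := vfLie_sub_frameBracket_mem_frameSpan (B := fun q => ∑ j, d j • V j q) hV hli hX
      (DifferentiableAt.fun_sum fun j _ => (hV j).const_smul (d j)) hXV
      (fun q => sum_smul_mem_frameSpan V q d) hξ rfl
    rw [vfLie_sum_smul_right X hV d] at hD
    simpa [f, Submodule.Quotient.mk_eq_zero] using
      (Submodule.sub_mem_iff_right _ (mem_bracketKernelCoords.mp hd)).mp hD
  have hQ : frameBracket V p α β ∈ frameSpan V p := by
    simpa [f, Submodule.Quotient.mk_eq_zero] using
      hf.apply_eq_zero_of_finrank_eq_two ((finrank_bracketKernel hli).symm.trans hrank) hXW hξ0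
        hξf hAW hBW
  exact (Submodule.sub_mem_iff_left _ hQ).mp
    (vfLie_sub_frameBracket_mem_frameSpan hV hli hA hB hAV hBV hα hβ)

theorem span_pair_eq_bracketKernel (hV : ∀ i, DifferentiableAt ℝ (V i) p)
    (hli : LinearIndependent ℝ (V · p)) (hrank : finrank ℝ (bracketKernel X V p) = 2)
    {A B : E → E} (hA : DifferentiableAt ℝ A p) (hB : DifferentiableAt ℝ B p)
    (hAV : ∀ q, A q ∈ frameSpan V q) (hBV : ∀ q, B q ∈ frameSpan V q)
    (hAB : LinearIndependent ℝ ![A p, B p]) (hXA : vfLie X A p ∈ frameSpan V p)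
    (hXB : vfLie X B p ∈ frameSpan V p) :
    Submodule.span ℝ {A p, B p} = bracketKernel X V p := by
  refine Submodule.eq_of_le_of_finrank_eq ?_ ?_
  · rw [Submodule.span_le]
    exact Set.insert_subset ((vfLie_mem_frameSpan_iff_mem_bracketKernel hV hli hA hAV).mp hXA)
      (Set.singleton_subset_iff.mpr
        ((vfLie_mem_frameSpan_iff_mem_bracketKernel hV hli hB hBV).mp hXB))
  · rw [← Matrix.range_cons_cons_empty (A p) (B p) ![], finrank_span_eq_card hAB, hrank]; rfl

end BracketKernelProperties

section ThreeFields

variable {E : Type*} [NormedAddCommGroup E] [NormedSpace ℝ E]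

theorem frameSpan_fin_three (V₁ V₂ V₃ : E → E) (q : E) :
    frameSpan ![V₁, V₂, V₃] q = Submodule.span ℝ {V₁ q, V₂ q, V₃ q} := by
  have hV : (![V₁, V₂, V₃] · q) = ![V₁ q, V₂ q, V₃ q] := by ext i; fin_cases i <;> rfl
  rw [frameSpan, hV, Matrix.range_cons, Matrix.range_cons_cons_empty, Set.singleton_union]

theorem frameSpan_sup_span_vfLie_fin_three (X V₁ V₂ V₃ : E → E) (q : E) :
    frameSpan ![V₁, V₂, V₃] q ⊔
        Submodule.span ℝ (Set.range fun j => vfLie X (![V₁, V₂, V₃] j) q) =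
      Submodule.span ℝ {V₁ q, V₂ q, V₃ q, vfLie X V₁ q, vfLie X V₂ q, vfLie X V₃ q} := by
  have hXV : (fun j => vfLie X (![V₁, V₂, V₃] j) q) =
      ![vfLie X V₁ q, vfLie X V₂ q, vfLie X V₃ q] := by
    ext j; fin_cases j <;> rfl
  rw [frameSpan_fin_three, ← Submodule.span_union, hXV, Matrix.range_cons,
    Matrix.range_cons_cons_empty, Set.singleton_union, Set.insert_union, Set.insert_union,
    Set.singleton_union]

end ThreeFields

theorem stmt_13_general (V₁ V₂ V₃ X : (Fin 5 → ℝ) → (Fin 5 → ℝ))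
    (hV₁ : ContDiff ℝ (⊤ : ℕ∞) V₁) (hV₂ : ContDiff ℝ (⊤ : ℕ∞) V₂)
    (hV₃ : ContDiff ℝ (⊤ : ℕ∞) V₃) (hX : ContDiff ℝ (⊤ : ℕ∞) X)
    (hind : ∀ p, LinearIndependent ℝ ![V₁ p, V₂ p, V₃ p])
    (hXmem : ∀ p, X p ∈ Submodule.span ℝ {V₁ p, V₂ p, V₃ p})
    (hX0 : ∀ p, X p ≠ 0)
    (hB₁B₃ : ∀ p, Module.finrank ℝ (Submodule.span ℝ
        {V₁ p, V₂ p, V₃ p, vfLie X V₁ p, vfLie X V₂ p, vfLie X V₃ p}) = 4) :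
    ∃ W : (Fin 5 → ℝ) → Submodule ℝ (Fin 5 → ℝ),
      (∀ p, (W p : Set (Fin 5 → ℝ)) =
        {v | v ∈ Submodule.span ℝ {V₁ p, V₂ p, V₃ p} ∧
          ∀ A : (Fin 5 → ℝ) → (Fin 5 → ℝ), ContDiff ℝ (⊤ : ℕ∞) A →
            (∀ q, A q ∈ Submodule.span ℝ {V₁ q, V₂ q, V₃ q}) → A p = v →
            vfLie X A p ∈ Submodule.span ℝ {V₁ p, V₂ p, V₃ p}}) ∧
      (∀ p, Module.finrank ℝ (W p) = 2) ∧
      (∀ p, X p ∈ W p) ∧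
      (∀ p, W p ≤ Submodule.span ℝ {V₁ p, V₂ p, V₃ p}) ∧
      (∀ A B : (Fin 5 → ℝ) → (Fin 5 → ℝ), ContDiff ℝ (⊤ : ℕ∞) A →
        ContDiff ℝ (⊤ : ℕ∞) B → (∀ q, A q ∈ W q) → (∀ q, B q ∈ W q) →
        ∀ p, vfLie A B p ∈ Submodule.span ℝ {V₁ p, V₂ p, V₃ p}) ∧
      (∀ (W' : (Fin 5 → ℝ) → Submodule ℝ (Fin 5 → ℝ))
        (A B : (Fin 5 → ℝ) → (Fin 5 → ℝ)), ContDiff ℝ (⊤ : ℕ∞) A →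
        ContDiff ℝ (⊤ : ℕ∞) B → (∀ p, LinearIndependent ℝ ![A p, B p]) →
        (∀ p, W' p = Submodule.span ℝ {A p, B p}) →
        (∀ p, X p ∈ W' p) →
        (∀ p, W' p ≤ Submodule.span ℝ {V₁ p, V₂ p, V₃ p}) →
        (∀ C D : (Fin 5 → ℝ) → (Fin 5 → ℝ), ContDiff ℝ (⊤ : ℕ∞) C →
          ContDiff ℝ (⊤ : ℕ∞) D → (∀ q, C q ∈ W' q) → (∀ q, D q ∈ W' q) →
          ∀ p, vfLie C D p ∈ Submodule.span ℝ {V₁ p, V₂ p, V₃ p}) →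
        ∀ p, W' p = W p) := by
  simp only [← frameSpan_fin_three] at hXmem ⊢
  set V : Fin 3 → (Fin 5 → ℝ) → Fin 5 → ℝ := ![V₁, V₂, V₃]
  have hV : ∀ i, ContDiff ℝ (⊤ : ℕ∞) (V i) := by intro i; fin_cases i <;> assumption
  have hVd : ∀ q i, DifferentiableAt ℝ (V i) q := fun q i => (hV i).differentiable (by simp) q
  have hli : ∀ q, LinearIndependent ℝ (V · q) := fun q => by
    convert hind q using 1; ext i; fin_cases i <;> rfl
  have hXd : ∀ q, DifferentiableAt ℝ X q := hX.differentiable (by simp)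
  have hrank : ∀ p, Module.finrank ℝ (bracketKernel X V p) = 2 := fun p => by
    simpa using finrank_bracketKernel_add_one (hli p)
      (by rw [frameSpan_sup_span_vfLie_fin_three, hB₁B₃ p]; rfl)
  refine ⟨bracketKernel X V, fun p => coe_bracketKernel (by simp) hV (hli p), hrank,
    fun p => mem_bracketKernel_self (hVd p) (hli p) (hXd p) hXmem,
    fun p => bracketKernel_le_frameSpan, ?_, ?_⟩
  · intro A B hA hB hAW hBW p
    exact vfLie_mem_frameSpan_of_mem_bracketKernel (hVd p) (hli p) (hXd p) hXmem (hX0 p) (hrank p)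
      (hA.differentiable (by simp) p) (hB.differentiable (by simp) p)
      (fun q => bracketKernel_le_frameSpan (hAW q)) (fun q => bracketKernel_le_frameSpan (hBW q))
      (hAW p) (hBW p)
  · intro W' A B hA hB hAB hW' hXW' hW'V hW'inv p
    have hAW' : ∀ q, A q ∈ W' q := fun q => hW' q ▸ Submodule.subset_span (by simp)
    have hBW' : ∀ q, B q ∈ W' q := fun q => hW' q ▸ Submodule.subset_span (by simp)
    rw [hW' p]
    exact span_pair_eq_bracketKernel (hVd p) (hli p) (hrank p) (hA.differentiable (by simp) p)
      (hB.differentiable (by simp) p) (fun q => hW'V q (hAW' q)) (fun q => hW'V q (hBW' q)) (hAB p)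
      (hW'inv X A hX hA hXW' hAW' p) (hW'inv X B hX hB hXW' hBW' p)

/-- Lemma 6(3) in a local model on `ℝ⁵`: if `B₃ = span{V₁,V₂,V₃}` is a rank-3
distribution with `[B₃,B₃]` of rank 4 or 5 and `[B₃,[B₃,B₃]] = TN`, and
`B₁ = span{X} ⊂ B₃` satisfies `rk[B₁,B₃] = 4` and `[B₁,[B₁,B₃]] = TN`, then there
is a unique rank-2 subdistribution `B₂` with `B₁ ⊆ B₂ ⊆ B₃` and `[B₂,B₂] ⊆ B₃`,
given pointwise by `B₂(x) = {v ∈ B₃(x) : [X,V](x) ∈ B₃(x) for all sections V of B₃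
extending v}`. -/
theorem stmt_13 (V₁ V₂ V₃ X : (Fin 5 → ℝ) → (Fin 5 → ℝ))
    (hV₁ : ContDiff ℝ (⊤ : ℕ∞) V₁) (hV₂ : ContDiff ℝ (⊤ : ℕ∞) V₂)
    (hV₃ : ContDiff ℝ (⊤ : ℕ∞) V₃) (hX : ContDiff ℝ (⊤ : ℕ∞) X)
    (hind : ∀ p, LinearIndependent ℝ ![V₁ p, V₂ p, V₃ p])
    (hXmem : ∀ p, X p ∈ Submodule.span ℝ {V₁ p, V₂ p, V₃ p})
    (hX0 : ∀ p, X p ≠ 0)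
    (hder : ∀ p, Module.finrank ℝ (Submodule.span ℝ
        {V₁ p, V₂ p, V₃ p, vfLie V₁ V₂ p, vfLie V₁ V₃ p, vfLie V₂ V₃ p}) = 4 ∨
      Module.finrank ℝ (Submodule.span ℝ
        {V₁ p, V₂ p, V₃ p, vfLie V₁ V₂ p, vfLie V₁ V₃ p, vfLie V₂ V₃ p}) = 5)
    (hfull : ∀ p, Submodule.span ℝ
        ({V₁ p, V₂ p, V₃ p, vfLie V₁ V₂ p, vfLie V₁ V₃ p, vfLie V₂ V₃ p,
          vfLie V₁ (vfLie V₁ V₂) p, vfLie V₁ (vfLie V₁ V₃) p, vfLie V₁ (vfLie V₂ V₃) p,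
          vfLie V₂ (vfLie V₁ V₂) p, vfLie V₂ (vfLie V₁ V₃) p, vfLie V₂ (vfLie V₂ V₃) p,
          vfLie V₃ (vfLie V₁ V₂) p, vfLie V₃ (vfLie V₁ V₃) p, vfLie V₃ (vfLie V₂ V₃) p} :
          Set (Fin 5 → ℝ)) = ⊤)
    (hB₁B₃ : ∀ p, Module.finrank ℝ (Submodule.span ℝ
        {V₁ p, V₂ p, V₃ p, vfLie X V₁ p, vfLie X V₂ p, vfLie X V₃ p}) = 4)
    (hB₁B₄ : ∀ p, Submodule.span ℝ
        ({V₁ p, V₂ p, V₃ p, vfLie X V₁ p, vfLie X V₂ p, vfLie X V₃ p,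
          vfLie X (vfLie X V₁) p, vfLie X (vfLie X V₂) p, vfLie X (vfLie X V₃) p} :
          Set (Fin 5 → ℝ)) = ⊤) :
    ∃ W : (Fin 5 → ℝ) → Submodule ℝ (Fin 5 → ℝ),
      (∀ p, (W p : Set (Fin 5 → ℝ)) =
        {v | v ∈ Submodule.span ℝ {V₁ p, V₂ p, V₃ p} ∧
          ∀ A : (Fin 5 → ℝ) → (Fin 5 → ℝ), ContDiff ℝ (⊤ : ℕ∞) A →
            (∀ q, A q ∈ Submodule.span ℝ {V₁ q, V₂ q, V₃ q}) → A p = v →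
            vfLie X A p ∈ Submodule.span ℝ {V₁ p, V₂ p, V₃ p}}) ∧
      (∀ p, Module.finrank ℝ (W p) = 2) ∧
      (∀ p, X p ∈ W p) ∧
      (∀ p, W p ≤ Submodule.span ℝ {V₁ p, V₂ p, V₃ p}) ∧
      (∀ A B : (Fin 5 → ℝ) → (Fin 5 → ℝ), ContDiff ℝ (⊤ : ℕ∞) A →
        ContDiff ℝ (⊤ : ℕ∞) B → (∀ q, A q ∈ W q) → (∀ q, B q ∈ W q) →
        ∀ p, vfLie A B p ∈ Submodule.span ℝ {V₁ p, V₂ p, V₃ p}) ∧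
      (∀ (W' : (Fin 5 → ℝ) → Submodule ℝ (Fin 5 → ℝ))
        (A B : (Fin 5 → ℝ) → (Fin 5 → ℝ)), ContDiff ℝ (⊤ : ℕ∞) A →
        ContDiff ℝ (⊤ : ℕ∞) B → (∀ p, LinearIndependent ℝ ![A p, B p]) →
        (∀ p, W' p = Submodule.span ℝ {A p, B p}) →
        (∀ p, X p ∈ W' p) →
        (∀ p, W' p ≤ Submodule.span ℝ {V₁ p, V₂ p, V₃ p}) →
        (∀ C D : (Fin 5 → ℝ) → (Fin 5 → ℝ), ContDiff ℝ (⊤ : ℕ∞) C →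
          ContDiff ℝ (⊤ : ℕ∞) D → (∀ q, C q ∈ W' q) → (∀ q, D q ∈ W' q) →
          ∀ p, vfLie C D p ∈ Submodule.span ℝ {V₁ p, V₂ p, V₃ p}) →
        ∀ p, W' p = W p) :=
  stmt_13_general V₁ V₂ V₃ X hV₁ hV₂ hV₃ hX hind hXmem hX0 hB₁B₃
end
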